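/- arXiv:1810.13087 — 6 statements merged into one kernel-verified Lean document; each statement's English description precedes it below -/
import Mathlib

section
/- (Soundness of the robust encoding for counting threshold m = 1.) Let N ≥ 1, τ, t ∈ ℕ and let f : Fin N → ℕ → Prop be a per-robot satisfaction predicate. Suppose that either (a) there exists a robot n ∈ Fin N such that f(n, t + k) holds for every k ∈ {0, 1, …, τ}, or (b) f(n, t) holds for every robot n ∈ Fin N. Then for every τ-window assignment g at t that is anchored at t (i.e., t ≤ g(n) ≤ t + τ for all n and g(n₀) = t for some n₀), there exists at least one robot n with f(n, g(n)). -/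
/-- Soundness of the robust encoding for counting threshold `m = 1`: if some
robot satisfies the inner formula throughout the window `[t, t + τ]`, or
every robot satisfies it at time `t`, then under any anchored `τ`-window
assignment at `t` some robot satisfies it. -/
theorem robust_tcp_encoding_sound_one (N τ t : ℕ) (hN : 1 ≤ N)
    (f : Fin N → ℕ → Prop)
    (h : (∃ n : Fin N, ∀ k ≤ τ, f n (t + k)) ∨ (∀ n : Fin N, f n t))
    (g : Fin N → ℕ) (hg : ∀ n, t ≤ g n ∧ g n ≤ t + τ)
    (hanchor : ∃ n₀ : Fin N, g n₀ = t) :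
    ∃ n : Fin N, f n (g n) := by
  rcases h with ⟨n, hn⟩ | hall
  · refine ⟨n, ?_⟩
    obtain ⟨h1, h2⟩ := hg n
    have h3 := hn (g n - t) (by omega)
    have h4 : t + (g n - t) = g n := by omega
    rwa [h4] at h3
  · obtain ⟨n₀, h₀⟩ := hanchor
    exact ⟨n₀, h₀ ▸ hall n₀⟩
end

section
/- (Soundness of the robust encoding of disjunctions of temporal counting propositions.) Let N, τ, t ∈ ℕ, let I ≥ 1, let f : Fin I → Fin N → ℕ → Prop be a family of per-robot satisfaction predicates, and let m : Fin I → ℕ with m(i) ≥ 1 for every i. Suppose the number of robots n ∈ Fin N such that, for every k ∈ {0, 1, …, τ}, at least one i ∈ Fin I has f(i, n, t + k), is strictly greater than Σ_{i ∈ Fin I} (m(i) − 1). Then for every τ-window assignment g at t (t ≤ g(n) ≤ t + τ for all n), there exists i ∈ Fin I such that the number of robots n with f(i, n, g(n)) is at least m(i). -/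
/-- Soundness of the robust encoding of disjunctions of temporal counting
propositions: if more than `∑ i (m i - 1)` robots satisfy, throughout the
window `[t, t + τ]`, at least one of the inner formulas, then under any
`τ`-window assignment at `t` some disjunct `i` is satisfied by at least
`m i` robots. -/
theorem robust_disjunction_encoding_sound (N τ t I : ℕ) (hI : 1 ≤ I)
    (f : Fin I → Fin N → ℕ → Prop) [∀ i n s, Decidable (f i n s)]
    (m : Fin I → ℕ) (hm : ∀ i, 1 ≤ m i)
    (h : (∑ i, (m i - 1)) <
      (Finset.univ.filter
        (fun n : Fin N => ∀ k ≤ τ, ∃ i : Fin I, f i n (t + k))).card)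
    (g : Fin N → ℕ) (hg : ∀ n, t ≤ g n ∧ g n ≤ t + τ) :
    ∃ i : Fin I,
      m i ≤ (Finset.univ.filter (fun n : Fin N => f i n (g n))).card := by
  by_contra hc
  push_neg at hc
  have hsub : (Finset.univ.filter
      (fun n : Fin N => ∀ k ≤ τ, ∃ i : Fin I, f i n (t + k))) ⊆
      Finset.univ.biUnion (fun i : Fin I =>
        Finset.univ.filter (fun n : Fin N => f i n (g n))) := by
    intro n hn
    simp only [Finset.mem_filter, Finset.mem_univ, true_and] at hn
    obtain ⟨h1, h2⟩ := hg n
    obtain ⟨i, hi⟩ := hn (g n - t) (by omega)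
    rw [show t + (g n - t) = g n by omega] at hi
    simp only [Finset.mem_biUnion, Finset.mem_filter, Finset.mem_univ, true_and]
    exact ⟨i, hi⟩
  have := (Finset.card_le_card hsub).trans (Finset.card_biUnion_le)
  have hle : ∑ i : Fin I, (Finset.univ.filter
      (fun n : Fin N => f i n (g n))).card ≤ ∑ i, (m i - 1) := by
    apply Finset.sum_le_sum
    intro i _
    have := hc i
    omega
  omega
end

section
/- (Completeness of the robust encoding of temporal counting propositions, threshold m ≥ 2.) Let N ≥ 1, τ, t ∈ ℕ, let m ≥ 2, and let f : Fin N → ℕ → Prop be a per-robot satisfaction predicate. If the number of robots n ∈ Fin N such that f(n, t + k) holds for every k ∈ {0, 1, …, τ} is strictly less than m, then there exists a τ-window assignment g at t that is anchored at t (t ≤ g(n) ≤ t + τ for all n and g(n₀) = t for some n₀) such that the number of robots n with f(n, g(n)) is strictly less than m. -/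
/-- Completeness of the robust encoding of temporal counting propositions for
threshold `m ≥ 2`: if fewer than `m` robots satisfy the inner formula
throughout the window `[t, t + τ]`, then there is an anchored `τ`-window
assignment at `t` under which fewer than `m` robots satisfy it. -/
theorem robust_tcp_encoding_complete (N τ t m : ℕ) (hN : 1 ≤ N) (hm : 2 ≤ m)
    (f : Fin N → ℕ → Prop) [∀ n s, Decidable (f n s)]
    (h : (Finset.univ.filter (fun n : Fin N => ∀ k ≤ τ, f n (t + k))).card < m) :
    ∃ g : Fin N → ℕ,
      (∀ n, t ≤ g n ∧ g n ≤ t + τ) ∧ (∃ n₀ : Fin N, g n₀ = t) ∧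
        (Finset.univ.filter (fun n : Fin N => f n (g n))).card < m := by
  classical
  have hwit : ∀ n : Fin N, ¬ (∀ k ≤ τ, f n (t + k)) →
      ∃ k, k ≤ τ ∧ ¬ f n (t + k) := by
    intro n hn
    push_neg at hn
    exact hn
  by_cases hex : ∃ n₀ : Fin N, ∀ k ≤ τ, f n₀ (t + k)
  · -- anchor at a robot satisfying everything
    obtain ⟨n₀, hn₀⟩ := hex
    refine ⟨fun n => if hn : ∀ k ≤ τ, f n (t + k) then t
        else t + (hwit n hn).choose, ?_, ⟨n₀, by dsimp only; rw [dif_pos hn₀]⟩, ?_⟩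
    · intro n
      dsimp only
      by_cases hn : ∀ k ≤ τ, f n (t + k)
      · rw [dif_pos hn]; omega
      · rw [dif_neg hn]
        exact ⟨Nat.le_add_right _ _, by
          have := (hwit n hn).choose_spec.1; omega⟩
    · refine lt_of_le_of_lt (Finset.card_le_card ?_) h
      intro n hn
      simp only [Finset.mem_filter, Finset.mem_univ, true_and] at hn ⊢
      by_contra hnot
      rw [dif_neg hnot] at hn
      exact (hwit n hnot).choose_spec.2 hn
  · -- no robot satisfies everything; anchor arbitrarily
    have h0 : (0 : ℕ) < N := hN
    let i0 : Fin N := ⟨0, h0⟩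
    push_neg at hex
    refine ⟨fun n => if n = i0 then t
        else t + (hwit n (by push_neg; exact hex n)).choose, ?_, ⟨i0, by simp⟩, ?_⟩
    · intro n
      by_cases hn : n = i0
      · simp [hn]
      · simp only [hn, if_neg, not_false_iff]
        exact ⟨Nat.le_add_right _ _, by
          have := (hwit n (by push_neg; exact hex n)).choose_spec.1; omega⟩
    · have hsub : (Finset.univ.filter (fun n : Fin N =>
          f n (if n = i0 then t else t + (hwit n (by push_neg; exact hex n)).choose)))
          ⊆ {i0} := by
        intro n hn
        simp only [Finset.mem_filter, Finset.mem_univ, true_and] at hn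
        by_contra hne
        simp only [Finset.mem_singleton] at hne
        rw [if_neg hne] at hn
        exact (hwit n (by push_neg; exact hex n)).choose_spec.2 hn
      calc _ ≤ ({i0} : Finset (Fin N)).card := Finset.card_le_card hsub
        _ = 1 := Finset.card_singleton _
        _ < m := by omega
end

section
/- (Completeness of the robust encoding of a disjunction of two temporal counting propositions over mutually exclusive formulas.) Let N, τ, t ∈ ℕ, let m₁ ≥ 1 and m₂ ≥ 1, and let f₁, f₂ : Fin N → ℕ → Prop be per-robot satisfaction predicates that are mutually exclusive, i.e., for all n ∈ Fin N and s ∈ ℕ, not both f₁(n, s) and f₂(n, s) hold. Suppose: (i) the number of robots n such that f₁(n, t+k) holds for all k ∈ {0, …, τ} is < m₁; (ii) the number of robots n such that f₂(n, t+k) holds for all k ∈ {0, …, τ} is < m₂; and (iii) the number of robots n such that f₁(n, t+k) ∨ f₂(n, t+k) holds for all k ∈ {0, …, τ} is < m₁ + m₂ − 1. Then there exists a τ-window assignment g at t (t ≤ g(n) ≤ t + τ for all n) such that the number of robots n with f₁(n, g(n)) is < m₁ and the number of robots n with f₂(n, g(n)) is < m₂. -/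
/-!
Split the robots into those satisfying `f₁` throughout the window (`A`), those satisfying `f₂`
throughout (`B`), and the remaining ones satisfying `f₁ ∨ f₂` throughout (`M`); every other robot
has a time at which it satisfies neither. Mutual exclusion makes `A` and `B` disjoint, so `#M` is
at most the slack `(m₁ - 1 - #A) + (m₂ - 1 - #B)`. Send as much of `M` as the first slack allows
to a time where `f₂` fails, and the rest to a time where `f₁` fails.
-/

open Finset

theorem Finset.exists_subset_card_le_and_card_sdiff_le {ι : Type*} [DecidableEq ι]
    (M : Finset ι) {a b : ℕ} (h : #M ≤ a + b) : ∃ S ⊆ M, #S ≤ a ∧ #(M \ S) ≤ b := by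
  obtain ⟨S, hSM, hS⟩ := M.exists_subset_card_eq (min_le_left (#M) a)
  refine ⟨S, hSM, hS ▸ min_le_right _ _, ?_⟩
  rw [card_sdiff_of_subset hSM, hS]
  omega

theorem Set.Nonempty.exists_mem_imp_and_imp {α : Type*} {W : Set α} (hW : W.Nonempty)
    {p q : α → Prop} {P Q : Prop} (hp : (∀ s ∈ W, p s) → P) (hq : (∀ s ∈ W, q s) → Q)
    (hpq : (∀ s ∈ W, p s ∨ q s) → P ∨ Q) : ∃ s ∈ W, (p s → P) ∧ (q s → Q) := by
  by_cases hP : P <;> by_cases hQ : Q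
  · obtain ⟨s, hs⟩ := hW
    exact ⟨s, hs, fun _ => hP, fun _ => hQ⟩
  · obtain ⟨s, hs, hqs⟩ := not_forall₂.mp (mt hq hQ)
    exact ⟨s, hs, fun _ => hP, fun h => absurd h hqs⟩
  · obtain ⟨s, hs, hps⟩ := not_forall₂.mp (mt hp hP)
    exact ⟨s, hs, fun h => absurd h hps, fun _ => hQ⟩
  · obtain ⟨s, hs, hpqs⟩ := not_forall₂.mp (mt hpq (by tauto))
    exact ⟨s, hs, fun h => absurd (Or.inl h) hpqs, fun h => absurd (Or.inr h) hpqs⟩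

section
open Classical

variable {ι α : Type*} [Fintype ι] {W : Set α} {p q : ι → α → Prop}

theorem exists_mem_filter_subset_of_cover (hW : W.Nonempty) (P Q : Finset ι)
    (hp : ∀ i, (∀ s ∈ W, p i s) → i ∈ P) (hq : ∀ i, (∀ s ∈ W, q i s) → i ∈ Q)
    (hpq : ∀ i, (∀ s ∈ W, p i s ∨ q i s) → i ∈ P ∪ Q) :
    ∃ g : ι → α, (∀ i, g i ∈ W) ∧
      ({i | p i (g i)} : Finset ι) ⊆ P ∧ ({i | q i (g i)} : Finset ι) ⊆ Q := by
  choose g hgW hgp hgq using fun i =>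
    hW.exists_mem_imp_and_imp (hp i) (hq i) (fun h => mem_union.mp (hpq i h))
  exact ⟨g, hgW, fun i hi => hgp i (mem_filter.mp hi).2, fun i hi => hgq i (mem_filter.mp hi).2⟩

theorem exists_mem_card_filter_lt (hW : W.Nonempty) {m₁ m₂ : ℕ}
    (hexcl : ∀ i, ∀ s ∈ W, ¬(p i s ∧ q i s))
    (h₁ : #{i | ∀ s ∈ W, p i s} < m₁) (h₂ : #{i | ∀ s ∈ W, q i s} < m₂)
    (h₁₂ : #{i | ∀ s ∈ W, p i s ∨ q i s} < m₁ + m₂ - 1) :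
    ∃ g : ι → α, (∀ i, g i ∈ W) ∧ #{i | p i (g i)} < m₁ ∧ #{i | q i (g i)} < m₂ := by
  set A : Finset ι := {i | ∀ s ∈ W, p i s}
  set B : Finset ι := {i | ∀ s ∈ W, q i s}
  set C : Finset ι := {i | ∀ s ∈ W, p i s ∨ q i s}
  have hAB : Disjoint A B := disjoint_filter.mpr fun i _ hp hq =>
    have ⟨s, hs⟩ := hW
    hexcl i s hs ⟨hp s hs, hq s hs⟩
  have hABC : A ∪ B ⊆ C := union_subset
    (monotone_filter_right _ fun _ _ h s hs => Or.inl (h s hs))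
    (monotone_filter_right _ fun _ _ h s hs => Or.inr (h s hs))
  set M := C \ (A ∪ B)
  have hM : #M ≤ (m₁ - 1 - #A) + (m₂ - 1 - #B) := by
    rw [card_sdiff_of_subset hABC, card_union_of_disjoint hAB]
    omega
  obtain ⟨S, hSM, hS, hMS⟩ := M.exists_subset_card_le_and_card_sdiff_le hM
  have hcover : C ⊆ (A ∪ S) ∪ (B ∪ M \ S) := by
    intro i
    simp only [M, mem_union, mem_sdiff]
    tauto
  obtain ⟨g, hgW, hgp, hgq⟩ := exists_mem_filter_subset_of_cover hW (A ∪ S) (B ∪ M \ S)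
    (fun i hi => mem_union_left _ (mem_filter.mpr ⟨mem_univ i, hi⟩))
    (fun i hi => mem_union_left _ (mem_filter.mpr ⟨mem_univ i, hi⟩))
    (fun i hi => hcover (mem_filter.mpr ⟨mem_univ i, hi⟩))
  refine ⟨g, hgW, ?_, ?_⟩
  · calc #{i | p i (g i)} ≤ #(A ∪ S) := card_le_card hgp
      _ ≤ #A + #S := card_union_le _ _
      _ < m₁ := by omega
  · calc #{i | q i (g i)} ≤ #(B ∪ M \ S) := card_le_card hgq
      _ ≤ #B + #(M \ S) := card_union_le _ _
      _ < m₂ := by omega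

end

theorem robust_disjunction_encoding_complete_general (N τ t m₁ m₂ : ℕ)
    (f₁ f₂ : Fin N → ℕ → Prop)
    [∀ n s, Decidable (f₁ n s)] [∀ n s, Decidable (f₂ n s)]
    (hexcl : ∀ (n : Fin N) (s : ℕ), ¬ (f₁ n s ∧ f₂ n s))
    (h1 : (Finset.univ.filter (fun n : Fin N => ∀ k ≤ τ, f₁ n (t + k))).card < m₁)
    (h2 : (Finset.univ.filter (fun n : Fin N => ∀ k ≤ τ, f₂ n (t + k))).card < m₂)
    (h12 : (Finset.univ.filter
        (fun n : Fin N => ∀ k ≤ τ, f₁ n (t + k) ∨ f₂ n (t + k))).card <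
      m₁ + m₂ - 1) :
    ∃ g : Fin N → ℕ,
      (∀ n, t ≤ g n ∧ g n ≤ t + τ) ∧
        (Finset.univ.filter (fun n : Fin N => f₁ n (g n))).card < m₁ ∧
        (Finset.univ.filter (fun n : Fin N => f₂ n (g n))).card < m₂ := by
  have hwindow (P : ℕ → Prop) : (∀ s ∈ Set.Icc t (t + τ), P s) ↔ ∀ k ≤ τ, P (t + k) :=
    ⟨fun h k hk => h (t + k) ⟨by omega, by omega⟩,
      fun h s ⟨hts, hst⟩ => by simpa [hts] using h (s - t) (by omega)⟩
  obtain ⟨g, hgW, hg₁, hg₂⟩ :=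
    exists_mem_card_filter_lt (Set.nonempty_Icc.mpr (Nat.le_add_right t τ)) (fun n s _ => hexcl n s)
      (by simpa only [hwindow] using h1) (by simpa only [hwindow] using h2)
      (by simpa only [hwindow] using h12)
  exact ⟨g, hgW, by convert hg₁, by convert hg₂⟩

/-- Completeness of the robust encoding of a disjunction of two temporal
counting propositions over mutually exclusive formulas. -/
theorem robust_disjunction_encoding_complete (N τ t m₁ m₂ : ℕ)
    (hm₁ : 1 ≤ m₁) (hm₂ : 1 ≤ m₂)
    (f₁ f₂ : Fin N → ℕ → Prop)
    [∀ n s, Decidable (f₁ n s)] [∀ n s, Decidable (f₂ n s)]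
    (hexcl : ∀ (n : Fin N) (s : ℕ), ¬ (f₁ n s ∧ f₂ n s))
    (h1 : (Finset.univ.filter (fun n : Fin N => ∀ k ≤ τ, f₁ n (t + k))).card < m₁)
    (h2 : (Finset.univ.filter (fun n : Fin N => ∀ k ≤ τ, f₂ n (t + k))).card < m₂)
    (h12 : (Finset.univ.filter
        (fun n : Fin N => ∀ k ≤ τ, f₁ n (t + k) ∨ f₂ n (t + k))).card <
      m₁ + m₂ - 1) :
    ∃ g : Fin N → ℕ,
      (∀ n, t ≤ g n ∧ g n ≤ t + τ) ∧
        (Finset.univ.filter (fun n : Fin N => f₁ n (g n))).card < m₁ ∧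
        (Finset.univ.filter (fun n : Fin N => f₂ n (g n))).card < m₂ :=
  robust_disjunction_encoding_complete_general N τ t m₁ m₂ f₁ f₂ hexcl h1 h2 h12
end

section
/- (Window characterization of robust counting satisfaction.) Let N, τ, t, m ∈ ℕ and let f : Fin N → ℕ → Prop be a per-robot satisfaction predicate. Then the number of robots n ∈ Fin N such that f(n, t + k) holds for every k ∈ {0, 1, …, τ} is at least m if and only if for every τ-window assignment g at t (every g : Fin N → ℕ with t ≤ g(n) ≤ t + τ for all n), the number of robots n with f(n, g(n)) is at least m. -/
/-- Window characterization of robust counting satisfaction: at least `m`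
robots satisfy the inner formula throughout the window `[t, t + τ]` iff
every `τ`-window assignment at `t` yields at least `m` satisfying robots. -/
theorem robust_count_iff_all_windows (N τ t m : ℕ) (f : Fin N → ℕ → Prop)
    [∀ n s, Decidable (f n s)] :
    m ≤ (Finset.univ.filter (fun n : Fin N => ∀ k ≤ τ, f n (t + k))).card ↔
      ∀ g : Fin N → ℕ, (∀ n, t ≤ g n ∧ g n ≤ t + τ) →
        m ≤ (Finset.univ.filter (fun n : Fin N => f n (g n))).card := by
  constructor
  · intro h g hg
    refine h.trans (Finset.card_le_card ?_)
    intro n hn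
    obtain ⟨h1, h2⟩ := hg n
    simp only [Finset.mem_filter, Finset.mem_univ, true_and] at hn ⊢
    have := hn (g n - t) (by omega : g n - t ≤ τ)
    have he : t + (g n - t) = g n := by omega
    rwa [he] at this
  · intro h
    classical
    set g : Fin N → ℕ := fun n =>
      if hn : ∃ k ≤ τ, ¬ f n (t + k) then t + Classical.choose hn else t with hgdef
    have hb : ∀ n, t ≤ g n ∧ g n ≤ t + τ := by
      intro n
      simp only [hgdef]
      split
      · rename_i hn
        have := (Classical.choose_spec hn).1
        omega
      · omega
    refine (h g hb).trans (Finset.card_le_card ?_)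
    intro n hn
    simp only [Finset.mem_filter, Finset.mem_univ, true_and] at hn ⊢
    intro k hk
    by_contra hfn
    have hex : ∃ k ≤ τ, ¬ f n (t + k) := ⟨k, hk, hfn⟩
    have : g n = t + Classical.choose hex := by simp [hgdef, hex]
    rw [this] at hn
    exact (Classical.choose_spec hex).2 hn
end

section
/- (Extraction of individual robot transitions from an admissible aggregate input.) Let S be a finite type (the set of discrete states), let N ∈ ℕ, let p : Fin N → S assign each robot its current state, and let u : S → S → ℕ be a flow such that for every state s ∈ S, Σ_{s' ∈ S} u(s, s') equals the number of robots n ∈ Fin N with p(n) = s. Then there exists an assignment p' : Fin N → S of next states such that for every pair of states (s, s'), the number of robots n with p(n) = s and p'(n) = s' equals u(s, s'). In particular, for every s' ∈ S the number of robots n with p'(n) = s' equals Σ_{s ∈ S} u(s, s'). -/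
/-- Extraction of individual robot transitions from an admissible aggregate
input: if the outgoing flow from each state matches the number of robots at
that state, then next states can be assigned to the robots realizing the
flow exactly; in particular the resulting aggregate state is the image of
the flow. -/
theorem extract_transitions_from_aggregate_input (S : Type*) [Fintype S]
    [DecidableEq S] (N : ℕ) (p : Fin N → S) (u : S → S → ℕ)
    (hu : ∀ s : S, ∑ s' : S, u s s' =
      (Finset.univ.filter (fun n : Fin N => p n = s)).card) :
    ∃ p' : Fin N → S,
      (∀ s s' : S,
        (Finset.univ.filter (fun n : Fin N => p n = s ∧ p' n = s')).card =
          u s s') ∧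
      ∀ s' : S,
        (Finset.univ.filter (fun n : Fin N => p' n = s')).card =
          ∑ s : S, u s s' := by
  classical
  have hcard : ∀ s : S,
      Fintype.card {n : Fin N // p n = s} = Fintype.card (Σ s' : S, Fin (u s s')) := by
    intro s
    rw [Fintype.card_subtype, ← hu s, Fintype.card_sigma]
    simp
  have e := fun s => Fintype.equivOfCardEq (hcard s).symm
  set p' : Fin N → S := fun n => ((e (p n)).symm ⟨n, rfl⟩).1 with hp'
  have key : ∀ s s' : S,
      (Finset.univ.filter (fun n : Fin N => p n = s ∧ p' n = s')).card = u s s' := by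
    intro s s'
    simp only [hp']
    have h1 : (Finset.univ.filter (fun n : Fin N =>
        p n = s ∧ ((e (p n)).symm ⟨n, rfl⟩).1 = s')).card =
        ((Finset.univ : Finset {n : Fin N // p n = s}).filter
          (fun x => ((e s).symm x).1 = s')).card := by
      symm
      apply Finset.card_bij (fun x _ => (x : {n : Fin N // p n = s}).1)
      · rintro ⟨n, hn⟩ hx
        simp only [Finset.mem_filter, Finset.mem_univ, true_and] at hx ⊢
        subst hn
        exact ⟨rfl, hx⟩
      · intro x _ y _ h
        exact Subtype.ext h
      · intro n hn
        simp only [Finset.mem_filter, Finset.mem_univ, true_and] at hn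
        obtain ⟨hn1, hn2⟩ := hn
        subst hn1
        exact ⟨⟨n, rfl⟩, by simpa using hn2, rfl⟩
    rw [h1, ← Fintype.card_subtype]
    have e2 : {x : {n : Fin N // p n = s} // ((e s).symm x).1 = s'} ≃ Fin (u s s') := by
      refine (Equiv.subtypeEquiv (q := fun y : Σ s'' : S, Fin (u s s'') => y.1 = s') (e s).symm (fun x => Iff.rfl)).trans ?_
      refine ⟨fun y => y.prop ▸ y.1.2, fun i => ⟨⟨s', i⟩, rfl⟩, ?_, ?_⟩
      · rintro ⟨⟨a, i⟩, rfl⟩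
        rfl
      · intro i
        rfl
    simpa using Fintype.card_congr e2
  refine ⟨p', key, ?_⟩
  intro s'
  rw [Finset.card_eq_sum_card_fiberwise (f := p) (t := Finset.univ)
    (fun n _ => Finset.mem_univ _)]
  apply Finset.sum_congr rfl
  intro s _
  rw [Finset.filter_filter]
  rw [← key s s']
  congr 1
  apply Finset.filter_congr
  intro n _
  simp [and_comm]
end
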